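/- arXiv:1204.0747 — 3 statements merged into one kernel-verified Lean document; each statement's English description precedes it below -/
import Mathlib

section
/- With the setup of the previous identity (τ an (n−1)-simplex in ℝⁿ, L and R on opposite sides of its affine hull, λ = L*τ and ρ = R*τ with circumcenters c_λ, c_ρ on the line ℓ through c_τ orthogonal to aff(τ); signed coordinates h_λ, h_ρ along ℓ with positive direction toward R, and h_R > 0 the coordinate of the projection of R): if R lies strictly outside the circumsphere of λ, then h_ρ > h_λ. -/
open scoped RealInnerProductSpace

set_option maxHeartbeats 1000000 in
/-- Circumcenter order in general dimension: `τ` is an `(n-1)`-simplex in `ℝⁿ` (here an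
`n`-simplex in `ℝ^(n+1)`); `L` and `R` lie strictly on opposite sides of its affine hull
(`u` a unit normal, positive direction toward `R`); `cL`, `cR` are the circumcenters of
`lam = L * τ` and `rho = R * τ`.  If `R` lies strictly outside the circumsphere of `λ`, then
the signed coordinate of `cR` along `u` exceeds that of `cL`: `hρ > hλ`. -/
theorem circumcenter_order_general
    (n : ℕ) (τ : Affine.Simplex ℝ (EuclideanSpace ℝ (Fin (n + 1))) n)
    (u : EuclideanSpace ℝ (Fin (n + 1)))
    (hu : ‖u‖ = 1) (huorth : ∀ w ∈ vectorSpan ℝ (Set.range τ.points), ⟪u, w⟫ = 0)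
    (L R : EuclideanSpace ℝ (Fin (n + 1)))
    (hLside : ⟪L - τ.circumcenter, u⟫ < 0)
    (hRside : 0 < ⟪R - τ.circumcenter, u⟫)
    (cL cR : EuclideanSpace ℝ (Fin (n + 1)))
    (hcL : ∀ i, dist cL (τ.points i) = dist cL L)
    (hcR : ∀ i, dist cR (τ.points i) = dist cR R)
    (hDel : dist R cL > dist (τ.points 0) cL) :
    ⟪cL - τ.circumcenter, u⟫ < ⟪cR - τ.circumcenter, u⟫ := by
  set c := τ.circumcenter with hc
  set V := vectorSpan ℝ (Set.range τ.points) with hV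
  have hu0 : u ≠ 0 := by
    intro h
    rw [h, norm_zero] at hu
    norm_num at hu
  have huV : u ∈ Vᗮ := (Submodule.mem_orthogonal' V u).2 huorth
  have hfrV : Module.finrank ℝ V = n := τ.independent.finrank_vectorSpan (by simp)
  have hfrVp : Module.finrank ℝ (Vᗮ) = 1 := by
    have h1 := Submodule.finrank_add_finrank_orthogonal V
    rw [hfrV, finrank_euclideanSpace_fin] at h1
    omega
  have hVperp : Vᗮ = Submodule.span ℝ {u} := by
    symm
    apply Submodule.eq_of_le_of_finrank_eq
    · rw [Submodule.span_le, Set.singleton_subset_iff]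
      exact huV
    · rw [hfrVp, finrank_span_singleton hu0]
  -- any point equidistant from all vertices lies on the line through c with direction u
  have key : ∀ x : EuclideanSpace ℝ (Fin (n + 1)),
      (∀ i, dist x (τ.points i) = dist x (τ.points 0)) →
      x - c = ⟪x - c, u⟫ • u := by
    intro x hx
    have hle : V ≤ (Submodule.span ℝ {x - c})ᗮ := by
      rw [hV, vectorSpan_eq_span_vsub_set_right ℝ (Set.mem_range_self (0 : Fin (n + 1))),
        Submodule.span_le]
      rintro _ ⟨_, ⟨i, rfl⟩, rfl⟩
      rw [SetLike.mem_coe, Submodule.mem_orthogonal_singleton_iff_inner_right]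
      have h1 : dist (τ.points 0) c = dist (τ.points i) c := by
        simp [hc, Affine.Simplex.dist_circumcenter_eq_circumradius]
      have h2 : dist (τ.points 0) x = dist (τ.points i) x := by
        rw [dist_comm (τ.points 0) x, dist_comm (τ.points i) x, hx i]
      have := EuclideanGeometry.inner_vsub_vsub_of_dist_eq_of_dist_eq h1 h2
      simpa using this
    have hmem : x - c ∈ Vᗮ := by
      have h2 : (Submodule.span ℝ {x - c})ᗮᗮ ≤ Vᗮ := Submodule.orthogonal_le hle
      exact h2 (Submodule.le_orthogonal_orthogonal _
        (Submodule.mem_span_singleton_self (x - c)))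
    rw [hVperp, Submodule.mem_span_singleton] at hmem
    obtain ⟨s, hs⟩ := hmem
    have : ⟪x - c, u⟫ = s := by
      rw [← hs, real_inner_smul_left, real_inner_self_eq_norm_sq, hu]
      ring
    rw [this, hs]
  have hxL : ∀ i, dist cL (τ.points i) = dist cL (τ.points 0) := fun i => by
    rw [hcL i, hcL 0]
  have hxR : ∀ i, dist cR (τ.points i) = dist cR (τ.points 0) := fun i => by
    rw [hcR i, hcR 0]
  set a := ⟪cL - c, u⟫ with ha
  set b := ⟪cR - c, u⟫ with hb
  have hL' : cL - c = a • u := key cL hxL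
  have hR' : cR - c = b • u := key cR hxR
  set h := ⟪R - c, u⟫ with hh
  -- c - τ.points 0 is in V, hence orthogonal to u
  have hq : ⟪u, c - τ.points 0⟫ = 0 := by
    apply huorth
    rw [hV, ← direction_affineSpan ℝ (Set.range τ.points)]
    exact AffineSubspace.vsub_mem_direction (τ.circumcenter_mem_affineSpan)
      (mem_affineSpan ℝ (Set.mem_range_self 0))
  set q : EuclideanSpace ℝ (Fin (n + 1)) := c - τ.points 0 with hq'
  set d : EuclideanSpace ℝ (Fin (n + 1)) := R - c with hd'
  have huu : ⟪u, u⟫ = 1 := by rw [real_inner_self_eq_norm_sq, hu]; norm_num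
  have hdu : ⟪d, u⟫ = h := rfl
  have hud : ⟪u, d⟫ = h := by rw [real_inner_comm]
  -- squared distance computations
  have e1 : dist cL (τ.points 0) ^ 2 = a ^ 2 + ‖q‖ ^ 2 := by
    have hv : cL - τ.points 0 = a • u + q := by rw [hq', ← hL']; abel
    rw [dist_eq_norm, hv, norm_add_sq_real, real_inner_smul_left, hq, norm_smul, hu,
      Real.norm_eq_abs]
    rw [mul_one, sq_abs]
    ring
  have e2 : dist cR (τ.points 0) ^ 2 = b ^ 2 + ‖q‖ ^ 2 := by
    have hv : cR - τ.points 0 = b • u + q := by rw [hq', ← hR']; abel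
    rw [dist_eq_norm, hv, norm_add_sq_real, real_inner_smul_left, hq, norm_smul, hu,
      Real.norm_eq_abs]
    rw [mul_one, sq_abs]
    ring
  have e3 : dist cR R ^ 2 = b ^ 2 - 2 * b * h + ‖d‖ ^ 2 := by
    have hv : cR - R = b • u - d := by rw [hd', ← hR']; abel
    rw [dist_eq_norm, hv, norm_sub_sq_real, real_inner_smul_left, hud,
      norm_smul, hu, Real.norm_eq_abs]
    rw [mul_one, sq_abs]
    ring
  have e4 : dist R cL ^ 2 = a ^ 2 - 2 * a * h + ‖d‖ ^ 2 := by
    have hv : R - cL = d - a • u := by rw [hd', ← hL']; abel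
    rw [dist_eq_norm, hv, norm_sub_sq_real, real_inner_smul_right, hdu,
      norm_smul, hu, Real.norm_eq_abs]
    rw [mul_one, sq_abs]
    ring
  have eR : dist cR (τ.points 0) ^ 2 = dist cR R ^ 2 := by rw [hcR 0]
  have hDel2 : dist R cL ^ 2 > dist (τ.points 0) cL ^ 2 := by
    have h0 : (0 : ℝ) ≤ dist (τ.points 0) cL := dist_nonneg
    nlinarith [hDel]
  rw [dist_comm (τ.points 0) cL] at hDel2
  have eRR : b ^ 2 + ‖q‖ ^ 2 = b ^ 2 - 2 * b * h + ‖d‖ ^ 2 := by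
    rw [← e2, ← e3]; exact eR
  have hab : 2 * a * h < 2 * b * h := by
    rw [e4, e1] at hDel2
    linarith
  have hhpos : 0 < h := hRside
  nlinarith [hab, hhpos]
end

section
/- Let A be a vertex shared by two triangles ABС and ABD in ℝ² forming a non-degenerate Delaunay pair across edge AB (C and D on opposite sides of line AB, each strictly outside the other triangle's circumcircle). Let m be the midpoint of AB, and let c₁, c₂ be the circumcenters of ABC and ABD. Define the signed area contribution of this pair to the dual of vertex A as s₁·area(A, m, c₁) + s₂·area(A, m, c₂), where areas are unsigned and sᵢ is the DEC sign (+1 if cᵢ is on the same side of line AB as the apex of its triangle, −1 otherwise). Then this sum is strictly positive. -/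
/-!
Both circumcentres lie on the perpendicular bisector of `AB`, say `cᵢ = m + tᵢ u`, and each
elementary dual triangle `(A, m, cᵢ)` has a right angle at `m`, so its area is `|tᵢ| ‖m - A‖ / 2`.
The DEC signs turn `|t₁|` into `t₁` and `|t₂|` into `-t₂`, so the sum is `(t₁ - t₂) ‖m - A‖ / 2`.
Along the bisector, `‖D - c‖² - ‖A - c‖²` is affine in `t` with slope `-2 ⟪D - m, u⟫ > 0`; it
vanishes at `c₂` and is positive at `c₁` (the Delaunay condition), hence `t₂ < t₁`.
-/

open scoped RealInnerProductSpace

noncomputable def det2 (v w : EuclideanSpace ℝ (Fin 2)) : ℝ := v 0 * w 1 - v 1 * w 0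

noncomputable def triArea (p q r : EuclideanSpace ℝ (Fin 2)) : ℝ :=
  |det2 (q - p) (r - p)| / 2

section InnerProductSpace

variable {V : Type*} [NormedAddCommGroup V] [InnerProductSpace ℝ V]

theorem exists_eq_midpoint_add_smul_of_dist_eq (hV : Module.finrank ℝ V = 2) {A B c u : V}
    (hAB : A ≠ B) (hu : u ≠ 0) (huAB : ⟪u, B - A⟫ = 0) (hc : dist c A = dist c B) :
    ∃ t : ℝ, c = midpoint ℝ A B + t • u := by
  have : Fact (Module.finrank ℝ V = 2) := ⟨hV⟩
  have hperp : ⟪B - A, c - midpoint ℝ A B⟫ = 0 := by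
    rw [real_inner_comm]
    exact AffineSubspace.mem_perpBisector_iff_inner_eq_zero.1
      (AffineSubspace.mem_perpBisector_iff_dist_eq.2 hc)
  obtain ⟨t, ht⟩ := Submodule.mem_span_singleton.1 <|
    Submodule.mem_span_singleton_of_inner_eq_zero_of_inner_eq_zero (sub_ne_zero.2 hAB.symm) hu
      hperp (by rwa [real_inner_comm])
  exact ⟨t, by rw [ht]; abel⟩

theorem dist_sq_sub_dist_sq_add_smul {A X m u : V} (hA : ⟪A - m, u⟫ = 0) (t : ℝ) :
    dist X (m + t • u) ^ 2 - dist A (m + t • u) ^ 2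
      = dist X m ^ 2 - dist A m ^ 2 - 2 * t * ⟪X - m, u⟫ := by
  have key : ∀ Y : V, dist Y (m + t • u) ^ 2
      = dist Y m ^ 2 - 2 * t * ⟪Y - m, u⟫ + t ^ 2 * ‖u‖ ^ 2 := by
    intro Y
    rw [dist_eq_norm, dist_eq_norm, show Y - (m + t • u) = (Y - m) - t • u by abel,
      norm_sub_sq_real, inner_smul_right, norm_smul, mul_pow, Real.norm_eq_abs, sq_abs]
    ring
  rw [key, key, hA]
  ring

theorem lt_of_dist_eq_of_dist_lt {A D m u : V} {t₁ t₂ : ℝ} (hA : ⟪A - m, u⟫ = 0)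
    (hD : ⟪D - m, u⟫ < 0) (h₂ : dist (m + t₂ • u) A = dist (m + t₂ • u) D)
    (h₁ : dist A (m + t₁ • u) < dist D (m + t₁ • u)) : t₂ < t₁ := by
  have e₁ := dist_sq_sub_dist_sq_add_smul (X := D) hA t₁
  have e₂ := dist_sq_sub_dist_sq_add_smul (X := D) hA t₂
  rw [dist_comm _ A, dist_comm _ D] at h₂
  rw [h₂, sub_self] at e₂
  have h₁' : dist A (m + t₁ • u) ^ 2 < dist D (m + t₁ • u) ^ 2 :=
    pow_lt_pow_left₀ h₁ dist_nonneg two_ne_zero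
  have key : 0 < (t₁ - t₂) * -⟪D - m, u⟫ := by linarith
  exact sub_pos.1 ((mul_pos_iff_of_pos_right (neg_pos.2 hD)).1 key)

end InnerProductSpace

theorem det2_sq_add_inner_sq (v w : EuclideanSpace ℝ (Fin 2)) :
    det2 v w ^ 2 + ⟪v, w⟫ ^ 2 = ‖v‖ ^ 2 * ‖w‖ ^ 2 := by
  simp only [det2, EuclideanSpace.inner_eq_star_dotProduct, dotProduct, Pi.star_apply,
    star_trivial, Fin.sum_univ_two, EuclideanSpace.norm_sq_eq, Real.norm_eq_abs, sq_abs]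
  ring

theorem abs_det2_of_inner_eq_zero {v w : EuclideanSpace ℝ (Fin 2)} (h : ⟪v, w⟫ = 0) :
    |det2 v w| = ‖v‖ * ‖w‖ := by
  have hsq : det2 v w ^ 2 = (‖v‖ * ‖w‖) ^ 2 := by
    linear_combination det2_sq_add_inner_sq v w - ⟪v, w⟫ * h
  rw [← Real.sqrt_sq_eq_abs, hsq, Real.sqrt_sq (by positivity)]

theorem triArea_add_smul {A m u : EuclideanSpace ℝ (Fin 2)} (hA : ⟪m - A, u⟫ = 0)
    (hu : ‖u‖ = 1) (t : ℝ) : triArea A m (m + t • u) = |t| * (‖m - A‖ / 2) := by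
  have h : det2 (m - A) (m + t • u - A) = t * det2 (m - A) u := by
    simp only [det2, PiLp.sub_apply, PiLp.add_apply, PiLp.smul_apply, smul_eq_mul]
    ring
  rw [triArea, h, abs_mul, abs_det2_of_inner_eq_zero hA, hu, mul_one, mul_div_assoc]

theorem ite_pos_mul_abs (t : ℝ) : (if 0 < t then (1 : ℝ) else -1) * |t| = t := by
  split_ifs with h
  · rw [one_mul, abs_of_pos h]
  · rw [abs_of_nonpos (not_lt.1 h)]; ring

theorem ite_neg_mul_abs (t : ℝ) : (if t < 0 then (1 : ℝ) else -1) * |t| = -t := by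
  split_ifs with h
  · rw [one_mul, abs_of_neg h]
  · rw [abs_of_nonneg (not_lt.1 h)]; ring

theorem vertex_dual_pair_area_pos_general
    (A B D c1 c2 m u : EuclideanSpace ℝ (Fin 2))
    (hAB : A ≠ B)
    (hm : m = midpoint ℝ A B)
    (hu : ‖u‖ = 1) (huAB : ⟪u, B - A⟫ = 0)
    (hDside : ⟪D - m, u⟫ < 0)
    (hc1A : dist c1 A = dist c1 B)
    (hc2A : dist c2 A = dist c2 B) (hc2D : dist c2 A = dist c2 D)
    (hDel1 : dist D c1 > dist A c1) :
    0 < (if 0 < ⟪c1 - m, u⟫ then (1 : ℝ) else -1) * triArea A m c1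
        + (if ⟪c2 - m, u⟫ < 0 then (1 : ℝ) else -1) * triArea A m c2 := by
  have hu₀ : u ≠ 0 := norm_ne_zero_iff.1 (by rw [hu]; exact one_ne_zero)
  obtain ⟨t₁, rfl⟩ : ∃ t : ℝ, c1 = m + t • u :=
    hm ▸ exists_eq_midpoint_add_smul_of_dist_eq finrank_euclideanSpace_fin hAB hu₀ huAB hc1A
  obtain ⟨t₂, rfl⟩ : ∃ t : ℝ, c2 = m + t • u :=
    hm ▸ exists_eq_midpoint_add_smul_of_dist_eq finrank_euclideanSpace_fin hAB hu₀ huAB hc2A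
  have hmA : ⟪m - A, u⟫ = 0 := by
    rw [hm, midpoint_sub_left, inner_smul_left, real_inner_comm, huAB, mul_zero]
  have hAm : ⟪A - m, u⟫ = 0 := by rw [← neg_sub, inner_neg_left, hmA, neg_zero]
  have ht : t₂ < t₁ := lt_of_dist_eq_of_dist_lt hAm hDside hc2D hDel1
  have hmA_pos : 0 < ‖m - A‖ := by
    rw [norm_pos_iff, sub_ne_zero, hm, Ne, midpoint_eq_left_iff]
    exact hAB
  simp only [add_sub_cancel_left, real_inner_smul_left, real_inner_self_eq_norm_sq, hu, one_pow,
    mul_one]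
  rw [triArea_add_smul hmA hu, triArea_add_smul hmA hu, ← mul_assoc, ← mul_assoc,
    ite_pos_mul_abs, ite_neg_mul_abs]
  linarith [mul_pos (sub_pos.2 ht) (half_pos hmA_pos)]

/-- For a non-degenerate Delaunay pair of triangles `ABC`, `ABD` across edge `AB`
(apices `C`, `D` strictly on opposite sides of line `AB`, each strictly outside the other
triangle's circumcircle), the net signed area that the pair contributes to the dual of
vertex `A` — the sum of the two elementary dual triangles `(A, m, c₁)`, `(A, m, c₂)` with
DEC signs — is strictly positive. -/
theorem vertex_dual_pair_area_pos
    (A B C D c1 c2 m u : EuclideanSpace ℝ (Fin 2))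
    (hAB : A ≠ B)
    (hm : m = midpoint ℝ A B)
    (hu : ‖u‖ = 1) (huAB : ⟪u, B - A⟫ = 0)
    (hCside : 0 < ⟪C - m, u⟫) (hDside : ⟪D - m, u⟫ < 0)
    (hc1A : dist c1 A = dist c1 B) (hc1C : dist c1 A = dist c1 C)
    (hc2A : dist c2 A = dist c2 B) (hc2D : dist c2 A = dist c2 D)
    (hDel1 : dist D c1 > dist A c1) (hDel2 : dist C c2 > dist A c2) :
    0 < (if 0 < ⟪c1 - m, u⟫ then (1 : ℝ) else -1) * triArea A m c1
        + (if ⟪c2 - m, u⟫ < 0 then (1 : ℝ) else -1) * triArea A m c2 :=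
  vertex_dual_pair_area_pos_general A B D c1 c2 m u hAB hm hu huAB hDside hc1A hc2A hc2D hDel1
end

section
/- Let τ be a triangle in ℝ³ shared by two tetrahedra λ = L*τ and ρ = R*τ with L, R strictly on opposite sides of the plane of τ, forming a non-degenerate Delaunay pair (R strictly outside the circumsphere of λ). Let c_τ be the circumcenter of τ, c_λ and c_ρ the circumcenters of λ and ρ, and u the unit normal to the plane of τ pointing toward R. Then the signed dual length of τ, ⟨c_ρ − c_λ, u⟩, is strictly positive. -/
/-!
Both circumcenters are equidistant from the vertices of `τ`, so `cR - cL` is orthogonal to the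
plane of `τ` and hence a multiple `t u` of its normal. Comparing powers of `P` and `R` with
respect to the two circumspheres (`R` lies on the sphere about `cR` and strictly outside the one
about `cL`, while `P` lies on both) gives `0 < ⟪R - P, cR - cL⟫ = t ⟪R - P, u⟫`, so `t > 0`.
-/

open scoped RealInnerProductSpace
open Module

variable {E : Type*} [NormedAddCommGroup E] [InnerProductSpace ℝ E]

lemma mem_orthogonal_vectorSpan_range_iff {ι : Type*} (p : ι → E) (i₀ : ι) {x : E} :
    x ∈ (vectorSpan ℝ (Set.range p))ᗮ ↔ ∀ i, ⟪p i - p i₀, x⟫ = 0 := by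
  rw [vectorSpan_range_eq_span_range_vsub_right ℝ p i₀, ← Submodule.span_singleton_le_iff_mem,
    ← Submodule.isOrtho_iff_le, Submodule.isOrtho_comm, Submodule.isOrtho_span]
  simp [real_inner_comm]

lemma AffineIndependent.finrank_orthogonal_vectorSpan [FiniteDimensional ℝ E] {n : ℕ}
    {p : Fin (n + 1) → E} (hp : AffineIndependent ℝ p) (hE : finrank ℝ E = n + 1) :
    finrank ℝ (vectorSpan ℝ (Set.range p))ᗮ = 1 :=
  Submodule.finrank_add_finrank_orthogonal' <| by
    rw [hp.finrank_vectorSpan (Fintype.card_fin _), hE]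

lemma inner_pos_of_mem_of_finrank_eq_one {K : Submodule ℝ E} (hK : finrank ℝ K = 1)
    {u v x : E} (hu : u ∈ K) (hv : v ∈ K) (hxu : 0 < ⟪x, u⟫) (hxv : 0 < ⟪x, v⟫) :
    0 < ⟪v, u⟫ := by
  have hu0 : (⟨u, hu⟩ : K) ≠ 0 := by
    rintro h
    simp_all
  obtain ⟨c, hc⟩ := (finrank_eq_one_iff_of_nonzero' _ hu0).mp hK ⟨v, hv⟩
  have hcu : c • u = v := congrArg Subtype.val hc
  subst hcu
  rw [real_inner_smul_right] at hxv
  rw [real_inner_smul_left, real_inner_self_eq_norm_sq]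
  have hc : 0 < c := pos_of_mul_pos_left hxv hxu.le
  have : 0 < ‖u‖ := norm_pos_iff.mpr (by rintro rfl; simp at hxu)
  positivity

/-- The difference of the powers of a point with respect to two spheres centred at `c₁`, `c₂` is
affine in the point, with gradient `2 (c₂ - c₁)`. -/
lemma inner_sub_sub_pos_of_dist_lt_of_dist_eq {a b c₁ c₂ : E} (h₁ : dist a c₁ < dist b c₁)
    (h₂ : dist a c₂ = dist b c₂) : 0 < ⟪b - a, c₂ - c₁⟫ := by
  have h₁' : ‖a - c₁‖ ^ 2 < ‖b - c₁‖ ^ 2 := by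
    rw [← dist_eq_norm, ← dist_eq_norm]; gcongr
  have h₂' : ‖a - c₂‖ ^ 2 = ‖b - c₂‖ ^ 2 := by
    rw [← dist_eq_norm, ← dist_eq_norm, h₂]
  simp only [norm_sub_sq_real, inner_sub_left, inner_sub_right] at h₁' h₂' ⊢
  linarith

theorem signed_dual_length_pos_3d_general
    (P Q S R cL cR u : EuclideanSpace ℝ (Fin 3))
    (hnd : AffineIndependent ℝ ![P, Q, S])
    (huPQ : ⟪u, Q - P⟫ = 0) (huPS : ⟪u, S - P⟫ = 0)
    (hRside : 0 < ⟪R - P, u⟫)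
    (hcL1 : dist cL P = dist cL Q) (hcL2 : dist cL P = dist cL S)
    (hcR1 : dist cR P = dist cR Q) (hcR2 : dist cR P = dist cR S)
    (hcR3 : dist cR P = dist cR R)
    (hDel : dist R cL > dist P cL) :
    0 < ⟪cR - cL, u⟫ := by
  have hnormal : ∀ x, ⟪x, Q - P⟫ = 0 → ⟪x, S - P⟫ = 0 →
      x ∈ (vectorSpan ℝ (Set.range ![P, Q, S]))ᗮ := by
    intro x hQ hS
    rw [mem_orthogonal_vectorSpan_range_iff _ 0]
    intro i
    fin_cases i <;> simp [real_inner_comm, hQ, hS]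
  have hcQ : ⟪cR - cL, Q - P⟫ = 0 :=
    EuclideanGeometry.inner_vsub_vsub_of_dist_eq_of_dist_eq (p₁ := P) (p₂ := Q)
      (by rwa [dist_comm, dist_comm Q]) (by rwa [dist_comm, dist_comm Q])
  have hcS : ⟪cR - cL, S - P⟫ = 0 :=
    EuclideanGeometry.inner_vsub_vsub_of_dist_eq_of_dist_eq (p₁ := P) (p₂ := S)
      (by rwa [dist_comm, dist_comm S]) (by rwa [dist_comm, dist_comm S])
  have hdelaunay : 0 < ⟪R - P, cR - cL⟫ :=
    inner_sub_sub_pos_of_dist_lt_of_dist_eq hDel (by simpa [dist_comm] using hcR3)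
  exact inner_pos_of_mem_of_finrank_eq_one (hnd.finrank_orthogonal_vectorSpan (by simp))
    (hnormal u huPQ huPS) (hnormal _ hcQ hcS) hRside hdelaunay

/-- Codimension-1 positivity in 3D: let `τ` be the triangle `PQS` shared by two tetrahedra
`L * τ` and `R * τ` with `L`, `R` strictly on opposite sides of the plane of `τ`, forming a
non-degenerate Delaunay pair (`R` strictly outside the circumsphere of `L * τ`).  With `u`
the unit normal to the plane of `τ` pointing toward `R`, and `cL`, `cR` the circumcenters
of the two tetrahedra, the signed dual length `⟪cR - cL, u⟫` of `τ` is strictly positive. -/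
theorem signed_dual_length_pos_3d
    (P Q S L R cL cR u : EuclideanSpace ℝ (Fin 3))
    (hnd : AffineIndependent ℝ ![P, Q, S])
    (hu : ‖u‖ = 1) (huPQ : ⟪u, Q - P⟫ = 0) (huPS : ⟪u, S - P⟫ = 0)
    (hLside : ⟪L - P, u⟫ < 0) (hRside : 0 < ⟪R - P, u⟫)
    (hcL1 : dist cL P = dist cL Q) (hcL2 : dist cL P = dist cL S)
    (hcL3 : dist cL P = dist cL L)
    (hcR1 : dist cR P = dist cR Q) (hcR2 : dist cR P = dist cR S)
    (hcR3 : dist cR P = dist cR R)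
    (hDel : dist R cL > dist P cL) :
    0 < ⟪cR - cL, u⟫ :=
  signed_dual_length_pos_3d_general P Q S R cL cR u hnd huPQ huPS hRside hcL1 hcL2 hcR1 hcR2 hcR3
    hDel
end
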